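/- Let h be a Hessenberg function on {1,…,n} with m(Γ_h) = 2. Then for every nonnegative integer i, #{ω ∈ A_2(Γ_h) : asc(ω) = i} = Σ_{T ∈ SK_2(Γ_h)} #{ω' ∈ A(Γ_{h_T}) : asc(ω') = i − deg(T)} (a summand being zero when deg(T) > i). -/

import Mathlib

/-!
The sinks of any orientation of `Γ_h` form an independent set. Fix a sink set `T` of maximum
size. Since `φ_T` is strictly increasing off `T`, it identifies `Γ_h` minus `T` with `Γ_{h_T}`,
preserving the order of the vertices, so restricting an acyclic orientation with sink set `T`
gives an acyclic orientation of `Γ_{h_T}` with the same ascents away from `T`. Conversely, an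
acyclic orientation of `Γ_{h_T}` extends to `Γ_h` by directing every edge at `T` into `T`: no cycle
passes through `T`, which has no outgoing edges, and the sink set contains `T`, hence equals `T` by
maximality. Every edge into `T` is an ascent and no edge out of `T` is, so the number of ascents
drops by exactly `deg(T)`. Summing over `T` gives the formula.
-/

open scoped Classical

/-- `h` is a Hessenberg function on `{1,…,n}`. -/
def IsHessenberg (n : ℕ) (h : ℕ → ℕ) : Prop :=
  (∀ i, 1 ≤ i → i ≤ n → i ≤ h i ∧ h i ≤ n) ∧
  (∀ i, 1 ≤ i → i < n → h i ≤ h (i + 1))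

/-- `{j,i}` (with `j < i`) is an edge of the incomparability graph `Γ_h`. -/
def IsEdge (n : ℕ) (h : ℕ → ℕ) (j i : ℕ) : Prop :=
  1 ≤ j ∧ j < i ∧ i ≤ n ∧ i ≤ h j

/-- The orientation `ω` directs the edge between `u` and `v` from `u` to `v`. -/
def Dir (n : ℕ) (h : ℕ → ℕ) (ω : ℕ → ℕ → Bool) (u v : ℕ) : Prop :=
  (IsEdge n h u v ∧ ω u v = true) ∨ (IsEdge n h v u ∧ ω v u = false)

/-- `ω` is an acyclic orientation of `Γ_h`. -/
def AcyclicOr (n : ℕ) (h : ℕ → ℕ) (ω : ℕ → ℕ → Bool) : Prop :=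
  ∀ v, ¬ Relation.TransGen (Dir n h ω) v v

/-- `v` is a sink of the orientation `ω`. -/
def IsSinkAt (n : ℕ) (h : ℕ → ℕ) (ω : ℕ → ℕ → Bool) (v : ℕ) : Prop :=
  ∀ u, IsEdge n h u v ∨ IsEdge n h v u → Dir n h ω u v

/-- `sk(ω)`, the set of sinks of `ω`. -/
noncomputable def sinks (n : ℕ) (h : ℕ → ℕ) (ω : ℕ → ℕ → Bool) : Finset ℕ :=
  (Finset.Icc 1 n).filter (fun v => IsSinkAt n h ω v)

/-- `T` is a sink set of `Γ_h`. -/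
def IsSinkSet (n : ℕ) (h : ℕ → ℕ) (T : Finset ℕ) : Prop :=
  ∃ ω, AcyclicOr n h ω ∧ sinks n h ω = T

/-- `asc(ω)`: the number of edges `{j,i}`, `j < i`, directed from `j` to `i`. -/
noncomputable def ascOr (n : ℕ) (h : ℕ → ℕ) (ω : ℕ → ℕ → Bool) : ℕ :=
  (((Finset.Icc 1 n) ×ˢ (Finset.Icc 1 n)).filter
    (fun p => IsEdge n h p.1 p.2 ∧ ω p.1 p.2 = true)).card

/-- `m(Γ_h)`: the maximum sink-set size. -/
noncomputable def maxSinkSize (n : ℕ) (h : ℕ → ℕ) : ℕ :=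
  sSup {k | ∃ ω, AcyclicOr n h ω ∧ (sinks n h ω).card = k}

/-- A normalized orientation: `false` outside the edges of `Γ_h` (so that counting
normalized orientation functions is the same as counting orientations of `Γ_h`). -/
def NormOr (n : ℕ) (h : ℕ → ℕ) (ω : ℕ → ℕ → Bool) : Prop :=
  ∀ u v, ¬ IsEdge n h u v → ω u v = false

/-- `φ_T(j) = j − #{t ∈ T : t ≤ j}`. -/
def phiT (T : Finset ℕ) (j : ℕ) : ℕ := j - (T.filter (fun t => t ≤ j)).card

/-- The inverse of `φ_T` on `{1,…,n} ∖ T`. -/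
noncomputable def psiT (n : ℕ) (T : Finset ℕ) (r : ℕ) : ℕ :=
  sInf {i | 1 ≤ i ∧ i ≤ n ∧ i ∉ T ∧ phiT T i = r}

/-- The induced Hessenberg function `h_T`. -/
noncomputable def hFunT (n : ℕ) (h : ℕ → ℕ) (T : Finset ℕ) (r : ℕ) : ℕ :=
  phiT T (h (psiT n T r))

/-- `deg(T)`: the number of edges `{ℓ,ℓ'}` of `Γ_h` with `ℓ' ∈ T` and `ℓ < ℓ'`. -/
noncomputable def degT (n : ℕ) (h : ℕ → ℕ) (T : Finset ℕ) : ℕ :=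
  (((Finset.Icc 1 n) ×ˢ (Finset.Icc 1 n)).filter
    (fun p => IsEdge n h p.1 p.2 ∧ p.2 ∈ T)).card

open Finset

variable {n : ℕ} {T : Finset ℕ} {i j r s : ℕ}

lemma zero_notMem_of_subset_Icc (hT : T ⊆ Icc 1 n) : 0 ∉ T :=
  fun h0 => by simpa using hT h0

lemma phiT_eq_card_sdiff (hT0 : 0 ∉ T) (j : ℕ) : phiT T j = #(Icc 1 j \ T) := by
  have : T.filter (· ≤ j) = T ∩ Icc 1 j := by
    ext t
    simp only [mem_filter, mem_inter, mem_Icc]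
    exact ⟨fun ⟨ht, htj⟩ => ⟨ht, Nat.one_le_iff_ne_zero.2 (ne_of_mem_of_not_mem ht hT0), htj⟩,
      fun ⟨ht, _, htj⟩ => ⟨ht, htj⟩⟩
  rw [phiT, card_sdiff, Nat.card_Icc, Nat.add_sub_cancel, this]

lemma phiT_mono (hT0 : 0 ∉ T) (hij : i ≤ j) : phiT T i ≤ phiT T j := by
  rw [phiT_eq_card_sdiff hT0, phiT_eq_card_sdiff hT0]
  exact card_le_card (sdiff_subset_sdiff (Icc_subset_Icc le_rfl hij) subset_rfl)

lemma phiT_lt (hT0 : 0 ∉ T) (hj : j ∉ T) (hij : i < j) : phiT T i < phiT T j := by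
  rw [phiT_eq_card_sdiff hT0, phiT_eq_card_sdiff hT0]
  refine card_lt_card ((ssubset_iff_of_subset
    (sdiff_subset_sdiff (Icc_subset_Icc le_rfl hij.le) subset_rfl)).2 ⟨j, ?_, ?_⟩)
  · exact mem_sdiff.2 ⟨mem_Icc.2 ⟨by omega, le_rfl⟩, hj⟩
  · exact fun hmem => by simp only [mem_sdiff, mem_Icc] at hmem; omega

lemma strictMonoOn_phiT (hT0 : 0 ∉ T) : StrictMonoOn (phiT T) (↑T)ᶜ :=
  fun _ _ _ hj hij => phiT_lt hT0 hj hij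

lemma one_le_phiT (hT0 : 0 ∉ T) (hi1 : 1 ≤ i) (hi : i ∉ T) : 1 ≤ phiT T i := by
  rw [phiT_eq_card_sdiff hT0, Nat.one_le_iff_ne_zero, ← pos_iff_ne_zero, card_pos]
  exact ⟨i, mem_sdiff.2 ⟨mem_Icc.2 ⟨hi1, le_rfl⟩, hi⟩⟩

lemma phiT_le (hT : T ⊆ Icc 1 n) (hi : i ≤ n) : phiT T i ≤ n - #T := by
  rw [phiT_eq_card_sdiff (zero_notMem_of_subset_Icc hT)]
  calc #(Icc 1 i \ T) ≤ #(Icc 1 n \ T) :=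
        card_le_card (sdiff_subset_sdiff (Icc_subset_Icc le_rfl hi) subset_rfl)
    _ = n - #T := by rw [card_sdiff_of_subset hT, Nat.card_Icc, Nat.add_sub_cancel]

lemma image_phiT_sdiff (hT : T ⊆ Icc 1 n) : (Icc 1 n \ T).image (phiT T) = Icc 1 (n - #T) := by
  have hT0 := zero_notMem_of_subset_Icc hT
  refine eq_of_subset_of_card_le (fun r hr => ?_) ?_
  · obtain ⟨i, hi, rfl⟩ := mem_image.1 hr
    obtain ⟨hi1n, hiT⟩ := mem_sdiff.1 hi
    exact mem_Icc.2 ⟨one_le_phiT hT0 (mem_Icc.1 hi1n).1 hiT, phiT_le hT (mem_Icc.1 hi1n).2⟩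
  · rw [card_image_of_injOn ((strictMonoOn_phiT hT0).injOn.mono fun i hi => (mem_sdiff.1 hi).2),
      card_sdiff_of_subset hT, Nat.card_Icc, Nat.card_Icc, Nat.add_sub_cancel, Nat.add_sub_cancel]

lemma psiT_spec_of_nonempty (hne : {i | 1 ≤ i ∧ i ≤ n ∧ i ∉ T ∧ phiT T i = r}.Nonempty) :
    psiT n T r ∈ Icc 1 n \ T ∧ phiT T (psiT n T r) = r := by
  obtain ⟨h1, h2, h3, h4⟩ := Nat.sInf_mem hne
  exact ⟨mem_sdiff.2 ⟨mem_Icc.2 ⟨h1, h2⟩, h3⟩, h4⟩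

-- `psiT n T r = sInf ∅ = 0` when `r` is not a value of `φ_T` on `{1,…,n} ∖ T`.
lemma psiT_spec_of_pos (hr : 1 ≤ psiT n T r) :
    psiT n T r ∈ Icc 1 n \ T ∧ phiT T (psiT n T r) = r :=
  psiT_spec_of_nonempty <| Set.nonempty_iff_ne_empty.2 fun he => by
    rw [psiT, he, Nat.sInf_empty] at hr
    omega

lemma psiT_spec (hT : T ⊆ Icc 1 n) (hr : r ∈ Icc 1 (n - #T)) :
    psiT n T r ∈ Icc 1 n \ T ∧ phiT T (psiT n T r) = r := by
  rw [← image_phiT_sdiff hT, mem_image] at hr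
  obtain ⟨i, hi, rfl⟩ := hr
  obtain ⟨hi1n, hiT⟩ := mem_sdiff.1 hi
  exact psiT_spec_of_nonempty ⟨i, (mem_Icc.1 hi1n).1, (mem_Icc.1 hi1n).2, hiT, rfl⟩

lemma psiT_phiT (hT : T ⊆ Icc 1 n) (hi : i ∈ Icc 1 n \ T) : psiT n T (phiT T i) = i := by
  have hT0 := zero_notMem_of_subset_Icc hT
  obtain ⟨hi1n, hiT⟩ := mem_sdiff.1 hi
  obtain ⟨hψ, hφψ⟩ := psiT_spec hT (r := phiT T i)
    (mem_Icc.2 ⟨one_le_phiT hT0 (mem_Icc.1 hi1n).1 hiT, phiT_le hT (mem_Icc.1 hi1n).2⟩)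
  exact (strictMonoOn_phiT hT0).injOn (mem_sdiff.1 hψ).2 hiT hφψ

variable {h : ℕ → ℕ}

lemma IsEdge.left_mem (e : IsEdge n h i j) : i ∈ Icc 1 n := by
  obtain ⟨h1, h2, h3, -⟩ := e
  exact mem_Icc.2 ⟨h1, by omega⟩

lemma IsEdge.right_mem (e : IsEdge n h i j) : j ∈ Icc 1 n := by
  obtain ⟨h1, h2, h3, -⟩ := e
  exact mem_Icc.2 ⟨by omega, h3⟩

lemma IsEdge.not_symm (e : IsEdge n h i j) : ¬ IsEdge n h j i :=
  fun e' => by have := e.2.1; have := e'.2.1; omega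

lemma hFunT_phiT (hT : T ⊆ Icc 1 n) (hi : i ∈ Icc 1 n \ T) :
    hFunT n h T (phiT T i) = phiT T (h i) := by
  rw [hFunT, psiT_phiT hT hi]

lemma isEdge_phiT_iff (hT : T ⊆ Icc 1 n) (hi : i ∈ Icc 1 n \ T) (hj : j ∈ Icc 1 n \ T) :
    IsEdge (n - #T) (hFunT n h T) (phiT T i) (phiT T j) ↔ IsEdge n h i j := by
  have hT0 := zero_notMem_of_subset_Icc hT
  obtain ⟨hi1n, hiT⟩ := mem_sdiff.1 hi
  obtain ⟨hj1n, hjT⟩ := mem_sdiff.1 hj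
  rw [IsEdge, IsEdge, hFunT_phiT hT hi]
  constructor
  · rintro ⟨-, hlt, -, hle⟩
    exact ⟨(mem_Icc.1 hi1n).1, lt_of_not_ge fun hji => (phiT_mono hT0 hji).not_gt hlt,
      (mem_Icc.1 hj1n).2, le_of_not_gt fun hhj => (phiT_lt hT0 hjT hhj).not_ge hle⟩
  · rintro ⟨hi1, hlt, hjn, hle⟩
    exact ⟨one_le_phiT hT0 hi1 hiT, phiT_lt hT0 hjT hlt, phiT_le hT hjn, phiT_mono hT0 hle⟩

lemma isEdge_hFunT_iff (hT : T ⊆ Icc 1 n) :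
    IsEdge (n - #T) (hFunT n h T) r s ↔ IsEdge n h (psiT n T r) (psiT n T s) := by
  constructor
  · intro e
    obtain ⟨hr, hr'⟩ := psiT_spec hT (IsEdge.left_mem e)
    obtain ⟨hs, hs'⟩ := psiT_spec hT (IsEdge.right_mem e)
    rwa [← isEdge_phiT_iff hT hr hs, hr', hs']
  · intro e
    obtain ⟨hr, hr'⟩ := psiT_spec_of_pos (mem_Icc.1 (IsEdge.left_mem e)).1
    obtain ⟨hs, hs'⟩ := psiT_spec_of_pos (mem_Icc.1 (IsEdge.right_mem e)).1
    rwa [← isEdge_phiT_iff hT hr hs, hr', hs'] at e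

variable {ω ω' : ℕ → ℕ → Bool} {t t' u v w : ℕ}

lemma IsSinkAt.eq_true (ht : IsSinkAt n h ω t) (e : IsEdge n h u t) : ω u t = true := by
  rcases ht u (Or.inl e) with ⟨-, hω⟩ | ⟨e', -⟩
  · exact hω
  · exact absurd e' (IsEdge.not_symm e)

lemma IsSinkAt.eq_false (ht : IsSinkAt n h ω t) (e : IsEdge n h t u) : ω t u = false := by
  rcases ht u (Or.inr e) with ⟨e', -⟩ | ⟨-, hω⟩
  · exact absurd e' (IsEdge.not_symm e)
  · exact hω

lemma IsSinkAt.not_isEdge (ht : IsSinkAt n h ω t) (ht' : IsSinkAt n h ω t') :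
    ¬ IsEdge n h t t' :=
  fun e => by simpa [ht.eq_false e] using ht'.eq_true e

lemma isSinkAt_of_mem_sinks (ht : t ∈ sinks n h ω) : IsSinkAt n h ω t := (mem_filter.1 ht).2

lemma IsSinkSet.not_isEdge (hT : IsSinkSet n h T) (ht : t ∈ T) (ht' : t' ∈ T) :
    ¬ IsEdge n h t t' := by
  obtain ⟨σ, -, rfl⟩ := hT
  exact (isSinkAt_of_mem_sinks ht).not_isEdge (isSinkAt_of_mem_sinks ht')

lemma card_sinks_le_maxSinkSize (hac : AcyclicOr n h ω) : #(sinks n h ω) ≤ maxSinkSize n h := by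
  refine le_csSup ⟨n, ?_⟩ ⟨ω, hac, rfl⟩
  rintro k ⟨σ, -, rfl⟩
  exact (card_filter_le _ _).trans (by simp)

noncomputable def restrictOr (n : ℕ) (T : Finset ℕ) (ω : ℕ → ℕ → Bool) : ℕ → ℕ → Bool :=
  fun r s => ω (psiT n T r) (psiT n T s)

lemma dir_restrictOr_iff (hT : T ⊆ Icc 1 n) :
    Dir (n - #T) (hFunT n h T) (restrictOr n T ω) r s ↔ Dir n h ω (psiT n T r) (psiT n T s) := by
  simp only [Dir, restrictOr, isEdge_hFunT_iff hT]

lemma normOr_restrictOr (hT : T ⊆ Icc 1 n) (hω : NormOr n h ω) :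
    NormOr (n - #T) (hFunT n h T) (restrictOr n T ω) :=
  fun _ _ e => hω _ _ ((isEdge_hFunT_iff hT).not.1 e)

lemma acyclicOr_restrictOr (hT : T ⊆ Icc 1 n) (hac : AcyclicOr n h ω) :
    AcyclicOr (n - #T) (hFunT n h T) (restrictOr n T ω) :=
  fun _ hv => hac _ <|
    Relation.TransGen.lift (psiT n T) (fun _ _ => (dir_restrictOr_iff hT).1) _ _ hv

noncomputable def extendOr (n : ℕ) (h : ℕ → ℕ) (T : Finset ℕ) (ω' : ℕ → ℕ → Bool) :
    ℕ → ℕ → Bool :=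
  fun u v => decide (IsEdge n h u v ∧ (v ∈ T ∨ (u ∉ T ∧ ω' (phiT T u) (phiT T v) = true)))

lemma normOr_extendOr : NormOr n h (extendOr n h T ω') :=
  fun _ _ e => decide_eq_false fun he => e he.1

lemma dir_extendOr (hT : T ⊆ Icc 1 n) (hd : Dir n h (extendOr n h T ω') u v) :
    v ∈ T ∨ (u ∉ T ∧ Dir (n - #T) (hFunT n h T) ω' (phiT T u) (phiT T v)) := by
  by_cases hvT : v ∈ T
  · exact Or.inl hvT
  right
  rcases hd with ⟨e, hval⟩ | ⟨e, hval⟩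
  · obtain ⟨-, hvT' | ⟨huT, hω'⟩⟩ := of_decide_eq_true hval
    · exact absurd hvT' hvT
    refine ⟨huT, Or.inl ⟨?_, hω'⟩⟩
    exact (isEdge_phiT_iff hT (mem_sdiff.2 ⟨IsEdge.left_mem e, huT⟩)
      (mem_sdiff.2 ⟨IsEdge.right_mem e, hvT⟩)).2 e
  · have hval := of_decide_eq_false hval
    simp only [e, hvT, not_false_eq_true, true_and, not_or, Bool.not_eq_true] at hval
    refine ⟨hval.1, Or.inr ⟨?_, hval.2⟩⟩
    exact (isEdge_phiT_iff hT (mem_sdiff.2 ⟨IsEdge.left_mem e, hvT⟩)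
      (mem_sdiff.2 ⟨IsEdge.right_mem e, hval.1⟩)).2 e

lemma not_dir_extendOr_of_mem (hind : ∀ t ∈ T, ∀ t' ∈ T, ¬ IsEdge n h t t') (ht : t ∈ T) :
    ¬ Dir n h (extendOr n h T ω') t w := by
  rintro (⟨e, hval⟩ | ⟨e, hval⟩)
  · obtain ⟨-, hwT | ⟨htT, -⟩⟩ := of_decide_eq_true hval
    · exact hind t ht w hwT e
    · exact htT ht
  · exact of_decide_eq_false hval ⟨e, Or.inl ht⟩

lemma acyclicOr_extendOr (hT : T ⊆ Icc 1 n) (hind : ∀ t ∈ T, ∀ t' ∈ T, ¬ IsEdge n h t t')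
    (hac' : AcyclicOr (n - #T) (hFunT n h T) ω') : AcyclicOr n h (extendOr n h T ω') := by
  have key : ∀ {a b}, Relation.TransGen (Dir n h (extendOr n h T ω')) a b → b ∉ T →
      Relation.TransGen (Dir (n - #T) (hFunT n h T) ω') (phiT T a) (phiT T b) := by
    intro a b hab
    induction hab with
    | single hd =>
      exact fun hbT => (dir_extendOr hT hd).resolve_left hbT |>.2 |> .single
    | tail _ hd ih =>
      intro hcT
      obtain ⟨hbT, hd'⟩ := (dir_extendOr hT hd).resolve_left hcT
      exact (ih hbT).tail hd'
  intro v hv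
  by_cases hvT : v ∈ T
  · obtain ⟨_, hd, -⟩ := Relation.TransGen.head'_iff.1 hv
    exact not_dir_extendOr_of_mem hind hvT hd
  · exact hac' _ (key hv hvT)

lemma subset_sinks_extendOr (hT : T ⊆ Icc 1 n) (hind : ∀ t ∈ T, ∀ t' ∈ T, ¬ IsEdge n h t t') :
    T ⊆ sinks n h (extendOr n h T ω') := by
  refine fun t ht => mem_filter.2 ⟨hT ht, fun u hu => ?_⟩
  rcases hu with e | e
  · exact Or.inl ⟨e, decide_eq_true ⟨e, Or.inl ht⟩⟩
  · refine Or.inr ⟨e, decide_eq_false ?_⟩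
    rintro ⟨-, huT | ⟨htT, -⟩⟩
    · exact hind t ht u huT e
    · exact htT ht

lemma extendOr_restrictOr (hT : T ⊆ Icc 1 n) (hω : NormOr n h ω) (hs : T ⊆ sinks n h ω) :
    extendOr n h T (restrictOr n T ω) = ω := by
  funext u v
  by_cases e : IsEdge n h u v
  swap
  · rw [hω u v e]
    exact normOr_extendOr u v e
  by_cases hvT : v ∈ T
  · rw [(isSinkAt_of_mem_sinks (hs hvT)).eq_true e]
    exact decide_eq_true ⟨e, Or.inl hvT⟩
  by_cases huT : u ∈ T
  · rw [(isSinkAt_of_mem_sinks (hs huT)).eq_false e]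
    exact decide_eq_false fun ⟨_, hor⟩ => hor.elim hvT fun h' => h'.1 huT
  have hu : u ∈ Icc 1 n \ T := mem_sdiff.2 ⟨IsEdge.left_mem e, huT⟩
  have hv : v ∈ Icc 1 n \ T := mem_sdiff.2 ⟨IsEdge.right_mem e, hvT⟩
  simp [extendOr, restrictOr, psiT_phiT hT hu, psiT_phiT hT hv, e, hvT, huT]

lemma restrictOr_extendOr (hT : T ⊆ Icc 1 n) (hω' : NormOr (n - #T) (hFunT n h T) ω') :
    restrictOr n T (extendOr n h T ω') = ω' := by
  funext r s
  by_cases e : IsEdge (n - #T) (hFunT n h T) r s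
  · obtain ⟨hr, hr'⟩ := psiT_spec hT (IsEdge.left_mem e)
    obtain ⟨hs, hs'⟩ := psiT_spec hT (IsEdge.right_mem e)
    simp [restrictOr, extendOr, (isEdge_hFunT_iff hT).1 e, hr', hs', (mem_sdiff.1 hr).2,
      (mem_sdiff.1 hs).2]
  · rw [hω' r s e]
    exact decide_eq_false fun he => e ((isEdge_hFunT_iff hT).2 he.1)

lemma card_ascents_off_eq_ascOr_restrictOr (hT : T ⊆ Icc 1 n) :
    #((Icc 1 n ×ˢ Icc 1 n).filter
        (fun p => IsEdge n h p.1 p.2 ∧ ω p.1 p.2 = true ∧ p.1 ∉ T ∧ p.2 ∉ T)) =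
      ascOr (n - #T) (hFunT n h T) (restrictOr n T ω) := by
  refine card_nbij' (Prod.map (phiT T) (phiT T)) (Prod.map (psiT n T) (psiT n T))
    ?_ ?_ ?_ ?_
  · rintro ⟨i, j⟩ hp
    simp only [coe_filter, mem_product, Set.mem_ofPred_eq] at hp ⊢
    obtain ⟨⟨hi, hj⟩, e, hω, hiT, hjT⟩ := hp
    have hi' := mem_sdiff.2 ⟨hi, hiT⟩
    have hj' := mem_sdiff.2 ⟨hj, hjT⟩
    have e' := (isEdge_phiT_iff (h := h) hT hi' hj').2 e
    refine ⟨⟨IsEdge.left_mem e', IsEdge.right_mem e'⟩, e', ?_⟩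
    simpa [restrictOr, psiT_phiT hT hi', psiT_phiT hT hj'] using hω
  · rintro ⟨r, s⟩ hq
    simp only [coe_filter, mem_product, Set.mem_ofPred_eq] at hq ⊢
    obtain ⟨-, e, hω⟩ := hq
    have e' := (isEdge_hFunT_iff hT).1 e
    exact ⟨⟨IsEdge.left_mem e', IsEdge.right_mem e'⟩, e', hω,
      (mem_sdiff.1 (psiT_spec hT (IsEdge.left_mem e)).1).2,
      (mem_sdiff.1 (psiT_spec hT (IsEdge.right_mem e)).1).2⟩
  · rintro ⟨i, j⟩ hp
    simp only [coe_filter, mem_product, Set.mem_ofPred_eq] at hp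
    obtain ⟨⟨hi, hj⟩, -, -, hiT, hjT⟩ := hp
    simp [psiT_phiT hT (mem_sdiff.2 ⟨hi, hiT⟩), psiT_phiT hT (mem_sdiff.2 ⟨hj, hjT⟩)]
  · rintro ⟨r, s⟩ hq
    simp only [coe_filter, mem_product, Set.mem_ofPred_eq] at hq
    simp [(psiT_spec hT hq.1.1).2, (psiT_spec hT hq.1.2).2]

lemma ascOr_eq_ascOr_restrictOr_add_degT (hT : T ⊆ Icc 1 n) (hs : T ⊆ sinks n h ω) :
    ascOr n h ω = ascOr (n - #T) (hFunT n h T) (restrictOr n T ω) + degT n h T := by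
  rw [ascOr, ← card_filter_add_card_filter_not (p := fun p : ℕ × ℕ => p.2 ∉ T), filter_filter,
    filter_filter, ← card_ascents_off_eq_ascOr_restrictOr hT, degT]
  congr 2 <;> refine filter_congr fun ⟨i, j⟩ _ => ?_
  · constructor
    · rintro ⟨⟨e, hω⟩, hjT⟩
      exact ⟨e, hω, fun hiT => by simp [(isSinkAt_of_mem_sinks (hs hiT)).eq_false e] at hω, hjT⟩
    · rintro ⟨e, hω, -, hjT⟩
      exact ⟨⟨e, hω⟩, hjT⟩
  · simp only [not_not]
    exact ⟨fun ⟨⟨e, _⟩, hjT⟩ => ⟨e, hjT⟩,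
      fun ⟨e, hjT⟩ => ⟨⟨e, (isSinkAt_of_mem_sinks (hs hjT)).eq_true e⟩, hjT⟩⟩

lemma finite_setOf_normOr (n : ℕ) (h : ℕ → ℕ) : {ω : ℕ → ℕ → Bool | NormOr n h ω}.Finite := by
  refine (Set.finite_range fun f : Fin (n + 1) → Fin (n + 1) → Bool => fun u v =>
    if huv : u ≤ n ∧ v ≤ n then f ⟨u, Nat.lt_succ_of_le huv.1⟩ ⟨v, Nat.lt_succ_of_le huv.2⟩
    else false).subset fun ω hω => ⟨fun a b => ω a b, funext₂ fun u v => ?_⟩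
  dsimp only
  split_ifs with huv
  · rfl
  · exact (hω u v fun e =>
      huv ⟨(mem_Icc.1 (IsEdge.left_mem e)).2, (mem_Icc.1 (IsEdge.right_mem e)).2⟩).symm

lemma bijOn_restrictOr (hT : T ⊆ Icc 1 n) (hind : ∀ t ∈ T, ∀ t' ∈ T, ¬ IsEdge n h t t')
    (hm : maxSinkSize n h ≤ #T) (i : ℕ) :
    Set.BijOn (restrictOr n T)
      {ω | NormOr n h ω ∧ AcyclicOr n h ω ∧ sinks n h ω = T ∧ ascOr n h ω = i}
      {ω' | NormOr (n - #T) (hFunT n h T) ω' ∧ AcyclicOr (n - #T) (hFunT n h T) ω' ∧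
        ascOr (n - #T) (hFunT n h T) ω' + degT n h T = i} := by
  refine Set.InvOn.bijOn (f' := extendOr n h T)
    ⟨fun ω hω => extendOr_restrictOr hT hω.1 hω.2.2.1.ge,
      fun ω' hω' => restrictOr_extendOr hT hω'.1⟩ ?_ ?_
  · rintro ω ⟨hω, hac, hsk, rfl⟩
    exact ⟨normOr_restrictOr hT hω, acyclicOr_restrictOr hT hac,
      (ascOr_eq_ascOr_restrictOr_add_degT hT hsk.ge).symm⟩
  · rintro ω' ⟨hω', hac', rfl⟩
    have hac := acyclicOr_extendOr hT hind hac'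
    have hsk : sinks n h (extendOr n h T ω') = T :=
      (eq_of_subset_of_card_le (subset_sinks_extendOr hT hind)
        ((card_sinks_le_maxSinkSize hac).trans hm)).symm
    refine ⟨normOr_extendOr, hac, hsk, ?_⟩
    rw [ascOr_eq_ascOr_restrictOr_add_degT hT hsk.ge, restrictOr_extendOr hT hω']

lemma ncard_sinks_eq_ascOr_eq (hT : T ⊆ Icc 1 n) (hind : ∀ t ∈ T, ∀ t' ∈ T, ¬ IsEdge n h t t')
    (hm : maxSinkSize n h ≤ #T) (i : ℕ) :
    Set.ncard {ω | NormOr n h ω ∧ AcyclicOr n h ω ∧ sinks n h ω = T ∧ ascOr n h ω = i} =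
      if degT n h T ≤ i then
        Set.ncard {ω' | NormOr (n - #T) (hFunT n h T) ω' ∧
          AcyclicOr (n - #T) (hFunT n h T) ω' ∧ ascOr (n - #T) (hFunT n h T) ω' = i - degT n h T}
      else 0 := by
  rw [(bijOn_restrictOr hT hind hm i).ncard_eq]
  split_ifs with hdeg
  · exact congrArg Set.ncard <| Set.ext fun ω' =>
      and_congr_right' <| and_congr_right' ⟨fun h => by omega, fun h => by omega⟩
  · refine (congrArg Set.ncard (Set.eq_empty_of_forall_notMem fun ω' hω' => hdeg ?_)).trans
      (Set.ncard_empty _)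
    exact hω'.2.2 ▸ Nat.le_add_left _ _

theorem ncard_acyclicOr_card_sinks_eq_sum {k : ℕ} (hm : maxSinkSize n h = k) (i : ℕ) :
    Set.ncard {ω : ℕ → ℕ → Bool | NormOr n h ω ∧ AcyclicOr n h ω ∧
        (sinks n h ω).card = k ∧ ascOr n h ω = i} =
      ∑ T ∈ (Finset.Icc 1 n).powerset.filter (fun T => IsSinkSet n h T ∧ T.card = k),
        (if degT n h T ≤ i then
          Set.ncard {ω' : ℕ → ℕ → Bool |
            NormOr (n - k) (hFunT n h T) ω' ∧
            AcyclicOr (n - k) (hFunT n h T) ω' ∧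
            ascOr (n - k) (hFunT n h T) ω' = i - degT n h T}
        else 0) := by
  set 𝒯 := (Icc 1 n).powerset.filter (fun T => IsSinkSet n h T ∧ #T = k)
  have hunion : {ω | NormOr n h ω ∧ AcyclicOr n h ω ∧ #(sinks n h ω) = k ∧ ascOr n h ω = i} =
      ⋃ T ∈ (𝒯 : Set (Finset ℕ)),
        {ω | NormOr n h ω ∧ AcyclicOr n h ω ∧ sinks n h ω = T ∧ ascOr n h ω = i} := by
    ext ω
    simp only [Set.mem_iUnion, mem_coe, exists_prop]
    constructor
    · rintro ⟨hω, hac, hk, hasc⟩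
      exact ⟨sinks n h ω, mem_filter.2 ⟨mem_powerset.2 (filter_subset _ _), ⟨ω, hac, rfl⟩, hk⟩,
        hω, hac, rfl, hasc⟩
    · rintro ⟨T, hT, hω, hac, rfl, hasc⟩
      exact ⟨hω, hac, (mem_filter.1 hT).2.2, hasc⟩
  rw [hunion, Set.Finite.ncard_biUnion 𝒯.finite_toSet
    (fun T _ => (finite_setOf_normOr n h).subset fun ω hω => hω.1), finsum_mem_coe_finset]
  · refine sum_congr rfl fun T hT => ?_
    obtain ⟨hTsub, hTsink, rfl⟩ := mem_filter.1 hT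
    exact ncard_sinks_eq_ascOr_eq (mem_powerset.1 hTsub)
      (fun t ht t' ht' => hTsink.not_isEdge ht ht') hm.le i
  · exact fun T _ T' _ hne => Set.disjoint_left.2 fun ω hω hω' =>
      hne (hω.2.2.1.symm.trans hω'.2.2.1)

theorem stmt18_general (n : ℕ) (h : ℕ → ℕ)
    (hm : maxSinkSize n h = 2) :
    ∀ i : ℕ,
      Set.ncard {ω : ℕ → ℕ → Bool | NormOr n h ω ∧ AcyclicOr n h ω ∧
          (sinks n h ω).card = 2 ∧ ascOr n h ω = i} =
        ∑ T ∈ (Finset.Icc 1 n).powerset.filter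
            (fun T => IsSinkSet n h T ∧ T.card = 2),
          (if degT n h T ≤ i then
            Set.ncard {ω' : ℕ → ℕ → Bool |
              NormOr (n - 2) (hFunT n h T) ω' ∧
              AcyclicOr (n - 2) (hFunT n h T) ω' ∧
              ascOr (n - 2) (hFunT n h T) ω' = i - degT n h T}
          else 0) :=
  ncard_acyclicOr_card_sinks_eq_sum hm

theorem stmt18 (n : ℕ) (h : ℕ → ℕ) (hn : 1 ≤ n) (hh : IsHessenberg n h)
    (hm : maxSinkSize n h = 2) :
    ∀ i : ℕ,
      Set.ncard {ω : ℕ → ℕ → Bool | NormOr n h ω ∧ AcyclicOr n h ω ∧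
          (sinks n h ω).card = 2 ∧ ascOr n h ω = i} =
        ∑ T ∈ (Finset.Icc 1 n).powerset.filter
            (fun T => IsSinkSet n h T ∧ T.card = 2),
          (if degT n h T ≤ i then
            Set.ncard {ω' : ℕ → ℕ → Bool |
              NormOr (n - 2) (hFunT n h T) ω' ∧
              AcyclicOr (n - 2) (hFunT n h T) ω' ∧
              ascOr (n - 2) (hFunT n h T) ω' = i - degT n h T}
          else 0) :=
  stmt18_general n h hm
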